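/- arXiv:2211.06991 — 3 statements merged into one kernel-verified Lean document; each statement's English description precedes it below -/
import Mathlib

section
/- Let R = ℚ[α,β,x,y,z]/I be the graded quotient ring described in the context. Then α^{15} = 0 in R, and consequently α ∈ P₀ R¹ (the class α has perversity 0). -/
open MvPolynomial Module

set_option synthInstance.maxHeartbeats 1000000
set_option maxHeartbeats 1000000

noncomputable section

abbrev P5 : Type := MvPolynomial (Fin 5) ℚ

def vA : P5 := X 0
def vB : P5 := X 1
def vX : P5 := X 2
def vY : P5 := X 3
def vZ : P5 := X 4

/-- weights: α, β have degree 1; x, y, z have degree 2 -/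
def wt5 : Fin 5 → ℕ := ![1, 1, 2, 2, 2]

/-- the Chung–Moon ideal of relations for `M_{4,1}` -/
def I41 : Ideal P5 := Ideal.span
  { vX * vZ - vY * vZ,
    vB ^ 2 * vZ - 3 * vY * vZ - 9 * vZ ^ 2,
    3 * vA ^ 2 * vZ - vA * vB * vZ + vY * vZ,
    vB ^ 2 * vY - 3 * vY ^ 2 - 9 * vY * vZ,
    vB ^ 2 * vX - vX * vY - 3 * vY ^ 2 - 3 * vA * vB * vZ - 9 * vY * vZ + 9 * vZ ^ 2,
    vB ^ 4 + 3 * vX ^ 2 - 9 * vX * vY - 3 * vY ^ 2 - 54 * vY * vZ - 81 * vZ ^ 2,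
    vB * vY * vZ + 9 * vA * vZ ^ 2 - 3 * vB * vZ ^ 2,
    2 * vB * vX * vY - 3 * vB * vY ^ 2 - 9 * vA * vY * vZ - 27 * vA * vZ ^ 2 + 9 * vB * vZ ^ 2,
    3 * vB * vX ^ 2 - 7 * vB * vY ^ 2 - 36 * vA * vY * vZ - 108 * vA * vZ ^ 2 + 36 * vB * vZ ^ 2,
    vA ^ 12 + 3 * vA ^ 11 * vB + 3 * vA ^ 10 * (vB ^ 2 + 2 * vX - vY)
      + vA ^ 9 * (-vB ^ 3 + 12 * vB * vX + 2 * vB * vY)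
      + 3 * vA ^ 8 * (9 * vX ^ 2 - 16 * vX * vY + 17 * vY ^ 2)
      + 28 * vA ^ 7 * vB * vY ^ 2 + 56 * vA ^ 6 * vY ^ 3
      + 201 * vA * vB * vZ ^ 5 - 19 * vY * vZ ^ 5 - 613 * vZ ^ 6,
    6 * vA ^ 10 * vX * vY - 12 * vA ^ 10 * vY ^ 2 - 10 * vA ^ 9 * vB * vY ^ 2
      - 45 * vA ^ 8 * vY ^ 3 - 104 * vA * vB * vZ ^ 6 + 2 * vY * vZ ^ 6 + 310 * vZ ^ 7 }

/-- `R = ℚ[α,β,x,y,z]/I`, isomorphic to `H^{2*}(M_{4,1}, ℚ)` -/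
abbrev R41 : Type := P5 ⧸ I41

def qm : P5 →ₐ[ℚ] R41 := Ideal.Quotient.mkₐ ℚ I41

/-- the degree-`e` graded piece `R^e` of `R` -/
def gr (e : ℕ) : Submodule ℚ R41 :=
  (weightedHomogeneousSubmodule ℚ wt5 e).map qm.toLinearMap

def gA : R41 := qm vA
def gB : R41 := qm vB
def gX : R41 := qm vX
def gY : R41 := qm vY
def gZ : R41 := qm vZ

/-- multiplication by `α^n` on `R` -/
def mulA (n : ℕ) : R41 →ₗ[ℚ] R41 := LinearMap.mulLeft ℚ (gA ^ n)

/-- `Ker(α^n)`, interpreted as `0` when `n ≤ 0` -/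
def kerA (n : ℤ) : Submodule ℚ R41 :=
  if n ≤ 0 then ⊥ else LinearMap.ker (mulA n.toNat)

/-- the perverse filtration
`P_k R^e = Σ_{i ≥ 1} (Ker(α^{14+k-2e+i}) ∩ Im(α^{i-1})) ∩ R^e` -/
def pervP (k : ℤ) (e : ℕ) : Submodule ℚ R41 :=
  (⨆ i : ℕ, kerA (14 + k - 2 * (e : ℤ) + ((i : ℤ) + 1)) ⊓ LinearMap.range (mulA i)) ⊓ gr e

/-- `c₂(0) = (25/32)α + (1/4)β` -/
def c20 : R41 := (25/32 : ℚ) • gA + (1/4 : ℚ) • gB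

/-- `c₁(2) = (3/16)α² + (1/4)αβ + x - y - z` -/
def c12 : R41 := (3/16 : ℚ) • gA ^ 2 + (1/4 : ℚ) • (gA * gB) + gX - gY - gZ

/-- `c₂(1) = (55/128)α² + (5/16)αβ + (3/8)β² - (3/4)x - (1/4)y - (17/4)z` -/
def c21 : R41 := (55/128 : ℚ) • gA ^ 2 + (5/16 : ℚ) • (gA * gB) + (3/8 : ℚ) • gB ^ 2
  - (3/4 : ℚ) • gX - (1/4 : ℚ) • gY - (17/4 : ℚ) • gZ

/-- `c₃(0) = (75/512)α² + (15/128)αβ - (1/16)β² + (9/32)x - (1/32)y - (1/32)z` -/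
def c30 : R41 := (75/512 : ℚ) • gA ^ 2 + (15/128 : ℚ) • (gA * gB) - (1/16 : ℚ) • gB ^ 2
  + (9/32 : ℚ) • gX - (1/32 : ℚ) • gY - (1/32 : ℚ) • gZ

/-! An explicit combination of the eleven relations with polynomial coefficients equals
`162 α¹⁵`, so `α¹⁵ = 0`. Hence `α = α · 1` lies in `Ker(α¹⁴) ∩ Im(α)`, the `i = 1` summand
of `P₀ R¹`. -/

theorem mul_pow_fifteen_eq_zero_of_relations {A : Type*} [CommRing A] (a b x y z : A)
    (r1 : x * z - y * z = 0)
    (r2 : b ^ 2 * z - 3 * y * z - 9 * z ^ 2 = 0)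
    (r3 : 3 * a ^ 2 * z - a * b * z + y * z = 0)
    (r4 : b ^ 2 * y - 3 * y ^ 2 - 9 * y * z = 0)
    (r5 : b ^ 2 * x - x * y - 3 * y ^ 2 - 3 * a * b * z - 9 * y * z + 9 * z ^ 2 = 0)
    (r6 : b ^ 4 + 3 * x ^ 2 - 9 * x * y - 3 * y ^ 2 - 54 * y * z - 81 * z ^ 2 = 0)
    (r7 : b * y * z + 9 * a * z ^ 2 - 3 * b * z ^ 2 = 0)
    (r8 : 2 * b * x * y - 3 * b * y ^ 2 - 9 * a * y * z - 27 * a * z ^ 2 + 9 * b * z ^ 2 = 0)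
    (r9 : 3 * b * x ^ 2 - 7 * b * y ^ 2 - 36 * a * y * z - 108 * a * z ^ 2 + 36 * b * z ^ 2 = 0)
    (r10 : a ^ 12 + 3 * a ^ 11 * b + 3 * a ^ 10 * (b ^ 2 + 2 * x - y)
      + a ^ 9 * (-b ^ 3 + 12 * b * x + 2 * b * y)
      + 3 * a ^ 8 * (9 * x ^ 2 - 16 * x * y + 17 * y ^ 2)
      + 28 * a ^ 7 * b * y ^ 2 + 56 * a ^ 6 * y ^ 3
      + 201 * a * b * z ^ 5 - 19 * y * z ^ 5 - 613 * z ^ 6 = 0)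
    (r11 : 6 * a ^ 10 * x * y - 12 * a ^ 10 * y ^ 2 - 10 * a ^ 9 * b * y ^ 2
      - 45 * a ^ 8 * y ^ 3 - 104 * a * b * z ^ 6 + 2 * y * z ^ 6 + 310 * z ^ 7 = 0) :
    162 * a ^ 15 = 0 := by
  linear_combination
    (-56862 * a ^ 10 * b - 574452 * a ^ 9 * b ^ 2 + 1442691 * a ^ 9 * y + 3870990 * a ^ 9 * z
      - 244944 * a ^ 8 * b * y - 1312200 * a ^ 8 * b * z + 4164048 * a ^ 7 * y ^ 2
      + 11757312 * a ^ 7 * y * z - 3919104 * a ^ 6 * b * y * z + 195372 * a ^ 2 * b * z ^ 4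
      - 781488 * a * b ^ 2 * z ^ 4 - 18480 * a * y ^ 5 - 1332000 * a * y ^ 4 * z
      - 10420488 * a * y ^ 3 * z ^ 2 - 26113590 * a * y ^ 2 * z ^ 3 - 20315286 * a * y * z ^ 4
      - 595836 * a * z ^ 5 + 2637846 * b * y * z ^ 4 + 2383344 * b * z ^ 5) * r1
    + (-58320 * a ^ 11 + 32076 * a ^ 10 * b - 526176 * a ^ 9 * y + 710046 * a ^ 9 * z
      + 379134 * a ^ 7 * y ^ 2 + 71928 * a ^ 7 * y * z + 30618 * a ^ 7 * z ^ 2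
      + 172494 * a ^ 5 * y ^ 3 + 148122 * a ^ 5 * y ^ 2 * z + 109836 * a ^ 5 * y * z ^ 2
      + 30618 * a ^ 5 * z ^ 3 + 9240 * a ^ 3 * y ^ 4 + 223992 * a ^ 3 * y ^ 3 * z
      + 325836 * a ^ 3 * y ^ 2 * z ^ 2 + 99630 * a ^ 3 * y * z ^ 3 + 117450 * a ^ 3 * z ^ 4
      - 195372 * a ^ 2 * b * z ^ 4 + 260496 * a * b ^ 2 * z ^ 4 - 22246 * a * y ^ 5
      - 81882 * a * y ^ 4 * z + 103176 * a * y ^ 3 * z ^ 2 + 289224 * a * y ^ 2 * z ^ 3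
      + 626148 * a * y * z ^ 4 + 2380554 * a * z ^ 5 - 24624 * b * y * z ^ 4
      - 794448 * b * z ^ 5) * r2
    + (-8748 * a ^ 10 * b - 46170 * a ^ 9 * y + 204849 * a ^ 9 * z + 27864 * a ^ 8 * b * y
      + 310554 * a ^ 8 * b * z + 80514 * a ^ 7 * y ^ 2 + 1344276 * a ^ 7 * y * z
      - 341172 * a ^ 7 * z ^ 2 + 52542 * a ^ 6 * b * y ^ 2 + 71928 * a ^ 6 * b * y * z
      + 30618 * a ^ 6 * b * z ^ 2 - 83160 * a ^ 5 * y ^ 3 - 463482 * a ^ 5 * y ^ 2 * z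
      - 1599426 * a ^ 5 * y * z ^ 2 + 91854 * a ^ 5 * z ^ 3 + 172494 * a ^ 4 * b * y ^ 3
      + 148122 * a ^ 4 * b * y ^ 2 * z + 109836 * a ^ 4 * b * y * z ^ 2 + 30618 * a ^ 4 * b * z ^ 3
      + 200214 * a ^ 3 * y ^ 4 + 820098 * a ^ 3 * y ^ 3 * z + 1087344 * a ^ 3 * y ^ 2 * z ^ 2
      + 329508 * a ^ 3 * y * z ^ 3 + 91854 * a ^ 3 * z ^ 4 + 9240 * a ^ 2 * b * y ^ 4
      + 223992 * a ^ 2 * b * y ^ 3 * z + 325836 * a ^ 2 * b * y ^ 2 * z ^ 2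
      + 99630 * a ^ 2 * b * y * z ^ 3 + 19764 * a ^ 2 * b * z ^ 4 - 57498 * a * y ^ 5
      - 21654 * a * y ^ 4 * z + 552204 * a * y ^ 3 * z ^ 2 - 4652478 * a * y ^ 2 * z ^ 3
      - 21216438 * a * y * z ^ 4 - 19911366 * a * z ^ 5 - 22246 * b * y ^ 5 - 81882 * b * y ^ 4 * z
      + 103176 * b * y ^ 3 * z ^ 2 + 289224 * b * y ^ 2 * z ^ 3 - 43560 * b * y * z ^ 4
      + 1992996 * b * z ^ 5) * r3
    + (12150 * a ^ 11 + 4374 * a ^ 10 * b - 648 * a ^ 9 * b ^ 2 - 59535 * a ^ 9 * x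
      - 118962 * a ^ 9 * y - 62208 * a ^ 8 * b * x + 38880 * a ^ 8 * b * y
      + 36288 * a ^ 7 * b ^ 2 * y + 27216 * a ^ 7 * x * y + 145152 * a ^ 7 * y ^ 2
      + 72576 * a ^ 6 * b * y ^ 2 - 9240 * a * x * y ^ 3 * z - 624420 * a * x * y ^ 2 * z ^ 2
      - 2400354 * a * x * y * z ^ 3 - 2255202 * a * x * z ^ 4 + 284886 * b * x * z ^ 4) * r4
    + (-8748 * a ^ 11 - 16524 * a ^ 10 * b + 10692 * a ^ 9 * b ^ 2 - 18954 * a ^ 9 * x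
      + 136323 * a ^ 9 * y + 679428 * a ^ 9 * z + 34992 * a ^ 8 * b * x - 136080 * a ^ 7 * y ^ 2
      + 9240 * a * y ^ 4 * z + 624420 * a * y ^ 3 * z ^ 2 + 2400354 * a * y ^ 2 * z ^ 3
      + 2255202 * a * y * z ^ 4 - 284886 * b * y * z ^ 4) * r5
    + (486 * a ^ 11 + 4860 * a ^ 10 * b - 1296 * a ^ 9 * b ^ 2 + 8748 * a ^ 9 * x) * r6
    + (-120285 * a ^ 10 - 408240 * a ^ 8 * y + 144342 * a ^ 8 * z + 653184 * a ^ 6 * y * z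
      + 27720 * a ^ 2 * y ^ 3 * z + 1873260 * a ^ 2 * y ^ 2 * z ^ 2 + 7201062 * a ^ 2 * y * z ^ 3
      + 6765606 * a ^ 2 * z ^ 4 - 854658 * a * b * z ^ 4 + 22246 * y ^ 5 + 148620 * y ^ 4 * z
      + 342684 * y ^ 3 * z ^ 2 + 738828 * y ^ 2 * z ^ 3 + 2198484 * y * z ^ 4
      + 2394504 * z ^ 5) * r7
    + (15228 * a ^ 10 + 250776 * a ^ 8 * x + 49572 * a ^ 8 * y + 435456 * a ^ 6 * x * y
      + 544320 * a ^ 6 * y ^ 2 + 284886 * y * z ^ 4) * r8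
    + (-4374 * a ^ 10 - 16686 * a ^ 9 * b - 34992 * a ^ 8 * x - 64152 * a ^ 8 * y
      - 290304 * a ^ 6 * y ^ 2) * r9
    + (162 * a ^ 3 - 486 * a ^ 2 * b + 972 * a * b ^ 2 - 972 * a * x + 486 * a * y - 1296 * b ^ 3
      + 3888 * b * x - 3240 * b * y) * r10
    + (-405 * a + 108 * b) * r11

theorem eq_zero_of_ofNat_mul_eq_zero {A : Type*} [Ring A] [Algebra ℚ A] (n : ℕ) [n.AtLeastTwo]
    {a : A} (h : (OfNat.ofNat n : A) * a = 0) : a = 0 := by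
  have hsmul : (OfNat.ofNat n : ℚ) • a = 0 := by rwa [Algebra.smul_def, map_ofNat]
  exact (smul_eq_zero.1 hsmul).resolve_left (OfNat.ofNat_ne_zero n)

theorem gA_pow_fifteen_eq_zero : gA ^ 15 = 0 := by
  refine eq_zero_of_ofNat_mul_eq_zero 162
    (mul_pow_fifteen_eq_zero_of_relations gA gB gX gY gZ ?_ ?_ ?_ ?_ ?_ ?_ ?_ ?_ ?_ ?_ ?_)
  all_goals
    simp only [gA, gB, gX, gY, gZ, ← map_ofNat qm, ← map_mul, ← map_pow, ← map_sub, ← map_add,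
      ← map_neg]
    exact Ideal.Quotient.eq_zero_iff_mem.2 (Ideal.subset_span (by simp))

theorem gA_mem_gr_one : gA ∈ gr 1 :=
  Submodule.mem_map_of_mem (isWeightedHomogeneous_X ℚ wt5 0)

theorem mem_kerA_iff {n : ℕ} (hn : 0 < n) {a : R41} : a ∈ kerA n ↔ gA ^ n * a = 0 := by
  simp [kerA, hn.ne', mulA]

theorem pow_mul_mem_pervP {k : ℤ} {e i : ℕ} (n : ℕ) (hn : (n : ℤ) = 14 + k - 2 * e + (i + 1))
    (hpos : 0 < n) {b : R41} (hker : gA ^ (n + i) * b = 0) (hgr : gA ^ i * b ∈ gr e) :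
    gA ^ i * b ∈ pervP k e := by
  refine ⟨Submodule.mem_iSup_of_mem i (Submodule.mem_inf.2 ⟨?_, b, rfl⟩), hgr⟩
  rw [← hn, mem_kerA_iff hpos, ← mul_assoc, ← pow_add, hker]

/-- `α^{15} = 0` in `R`, and consequently `α ∈ P₀ R¹` (the class `α` has perversity 0). -/
theorem alpha_pow_fifteen_eq_zero_and_alpha_perversity_zero :
    gA ^ 15 = 0 ∧ gA ∈ pervP 0 1 := by
  refine ⟨gA_pow_fifteen_eq_zero, ?_⟩
  simpa using pow_mul_mem_pervP (k := 0) (e := 1) (i := 1) (b := 1) 14 (by norm_num) (by norm_num)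
    (by simpa using gA_pow_fifteen_eq_zero) (by simpa using gA_mem_gr_one)
end
end

section
/- Let R = ℚ[α,β,x,y,z]/I be the graded quotient ring described in the context. Then the element c₃(0) := (75/512)α²+(15/128)αβ−(1/16)β²+(9/32)x−(1/32)y−(1/32)z ∈ R² satisfies c₃(0) ∈ P₃ R² and c₃(0) ∉ P₂ R²; that is, c₃(0) has perversity 3. -/
open MvPolynomial Module

set_option synthInstance.maxHeartbeats 1000000
set_option maxHeartbeats 1000000

noncomputable section

/-! ### Auxiliary machinery -/

set_option maxRecDepth 100000

/-- canonical exponent vectors -/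
def ee (a b c d f : ℕ) : Fin 5 →₀ ℕ :=
  Finsupp.single 0 a + Finsupp.single 1 b + Finsupp.single 2 c + Finsupp.single 3 d +
    Finsupp.single 4 f

lemma ee_apply (a b c d f : ℕ) : ∀ i, ee a b c d f i = ![a,b,c,d,f] i := by
  intro i; fin_cases i <;> simp [ee, Finsupp.single_apply]

lemma ele {a b c d f a' b' c' d' f' : ℕ} :
    ee a b c d f ≤ ee a' b' c' d' f' ↔ a ≤ a' ∧ b ≤ b' ∧ c ≤ c' ∧ d ≤ d' ∧ f ≤ f' := by
  constructor
  · intro h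
    exact ⟨by simpa [ee_apply] using h 0, by simpa [ee_apply] using h 1,
      by simpa [ee_apply] using h 2, by simpa [ee_apply] using h 3, by simpa [ee_apply] using h 4⟩
  · rintro ⟨h0,h1,h2,h3,h4⟩ i
    fin_cases i <;> simpa [ee_apply]

lemma eeq {a b c d f a' b' c' d' f' : ℕ} :
    ee a b c d f = ee a' b' c' d' f' ↔ (a = a' ∧ b = b' ∧ c = c' ∧ d = d' ∧ f = f') := by
  constructor
  · intro h
    refine ⟨?_, ?_, ?_, ?_, ?_⟩ <;>
      [have := congrArg (fun g => g 0) h; have := congrArg (fun g => g 1) h;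
       have := congrArg (fun g => g 2) h; have := congrArg (fun g => g 3) h;
       have := congrArg (fun g => g 4) h] <;> simpa [ee_apply] using this
  · rintro ⟨rfl,rfl,rfl,rfl,rfl⟩; rfl

lemma esub (a b c d f a' b' c' d' f' : ℕ) :
    ee a b c d f - ee a' b' c' d' f' = ee (a-a') (b-b') (c-c') (d-d') (f-f') := by
  ext i; rw [Finsupp.tsub_apply]; fin_cases i <;> simp [ee_apply]

lemma emono (a b c d f : ℕ) (r : ℚ) :
    monomial (ee a b c d f) r = C r * vA^a * vB^b * vX^c * vY^d * vZ^f := by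
  rw [vA, vB, vX, vY, vZ, X_pow_eq_monomial, X_pow_eq_monomial, X_pow_eq_monomial,
    X_pow_eq_monomial, X_pow_eq_monomial, C_mul_monomial, monomial_mul, monomial_mul,
    monomial_mul, monomial_mul, ee]
  simp

/-- the dual functional certifying non-membership -/
def T : P5 →ₗ[ℚ] ℚ :=
  (2:ℚ) • lcoeff ℚ (ee 11 0 0 2 0) + (4:ℚ) • lcoeff ℚ (ee 11 0 1 1 0) + (9:ℚ) • lcoeff ℚ (ee 11 0 2 0 0)
  + (6:ℚ) • lcoeff ℚ (ee 11 2 0 1 0) + (10:ℚ) • lcoeff ℚ (ee 11 2 1 0 0) + (15:ℚ) • lcoeff ℚ (ee 11 4 0 0 0)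
  - (18:ℚ) • lcoeff ℚ (ee 12 1 0 1 0) - (30:ℚ) • lcoeff ℚ (ee 12 1 1 0 0) - (45:ℚ) • lcoeff ℚ (ee 12 3 0 0 0)
  + (18:ℚ) • lcoeff ℚ (ee 13 0 0 1 0) + (18:ℚ) • lcoeff ℚ (ee 13 0 1 0 0) + (48:ℚ) • lcoeff ℚ (ee 13 2 0 0 0)

lemma T_apply (p : P5) : T p =
  2 * coeff (ee 11 0 0 2 0) p + 4 * coeff (ee 11 0 1 1 0) p + 9 * coeff (ee 11 0 2 0 0) p
  + 6 * coeff (ee 11 2 0 1 0) p + 10 * coeff (ee 11 2 1 0 0) p + 15 * coeff (ee 11 4 0 0 0) p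
  - 18 * coeff (ee 12 1 0 1 0) p - 30 * coeff (ee 12 1 1 0 0) p - 45 * coeff (ee 12 3 0 0 0) p
  + 18 * coeff (ee 13 0 0 1 0) p + 18 * coeff (ee 13 0 1 0 0) p + 48 * coeff (ee 13 2 0 0 0) p := by
  simp [T, lcoeff]

lemma Tg1 (p : P5) : T (p * (vX * vZ - vY * vZ)) = 0 := by
  have hg : (vX * vZ - vY * vZ : P5) = monomial (ee 0 0 0 1 1) (-1 : ℚ) + monomial (ee 0 0 1 0 1) (1 : ℚ) := by
    rw [emono, emono]
    simp only [map_one, map_neg, map_ofNat]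
    ring
  rw [hg]
  simp only [mul_add, map_add, T_apply, coeff_mul_monomial', ele, esub]
  norm_num
  try ring

lemma Tg2 (p : P5) : T (p * (vB ^ 2 * vZ - 3 * vY * vZ - 9 * vZ ^ 2)) = 0 := by
  have hg : (vB ^ 2 * vZ - 3 * vY * vZ - 9 * vZ ^ 2 : P5) = monomial (ee 0 0 0 0 2) (-9 : ℚ) + monomial (ee 0 0 0 1 1) (-3 : ℚ) + monomial (ee 0 2 0 0 1) (1 : ℚ) := by
    rw [emono, emono, emono]
    simp only [map_one, map_neg, map_ofNat]
    ring
  rw [hg]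
  simp only [mul_add, map_add, T_apply, coeff_mul_monomial', ele, esub]
  norm_num
  try ring

lemma Tg3 (p : P5) : T (p * (3 * vA ^ 2 * vZ - vA * vB * vZ + vY * vZ)) = 0 := by
  have hg : (3 * vA ^ 2 * vZ - vA * vB * vZ + vY * vZ : P5) = monomial (ee 0 0 0 1 1) (1 : ℚ) + monomial (ee 1 1 0 0 1) (-1 : ℚ) + monomial (ee 2 0 0 0 1) (3 : ℚ) := by
    rw [emono, emono, emono]
    simp only [map_one, map_neg, map_ofNat]
    ring
  rw [hg]
  simp only [mul_add, map_add, T_apply, coeff_mul_monomial', ele, esub]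
  norm_num
  try ring

lemma Tg4 (p : P5) : T (p * (vB ^ 2 * vY - 3 * vY ^ 2 - 9 * vY * vZ)) = 0 := by
  have hg : (vB ^ 2 * vY - 3 * vY ^ 2 - 9 * vY * vZ : P5) = monomial (ee 0 0 0 1 1) (-9 : ℚ) + monomial (ee 0 0 0 2 0) (-3 : ℚ) + monomial (ee 0 2 0 1 0) (1 : ℚ) := by
    rw [emono, emono, emono]
    simp only [map_one, map_neg, map_ofNat]
    ring
  rw [hg]
  simp only [mul_add, map_add, T_apply, coeff_mul_monomial', ele, esub]
  norm_num
  try ring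

lemma Tg5 (p : P5) : T (p * (vB ^ 2 * vX - vX * vY - 3 * vY ^ 2 - 3 * vA * vB * vZ - 9 * vY * vZ + 9 * vZ ^ 2)) = 0 := by
  have hg : (vB ^ 2 * vX - vX * vY - 3 * vY ^ 2 - 3 * vA * vB * vZ - 9 * vY * vZ + 9 * vZ ^ 2 : P5) = monomial (ee 0 0 0 0 2) (9 : ℚ) + monomial (ee 0 0 0 1 1) (-9 : ℚ) + monomial (ee 0 0 0 2 0) (-3 : ℚ) + monomial (ee 0 0 1 1 0) (-1 : ℚ) + monomial (ee 0 2 1 0 0) (1 : ℚ) + monomial (ee 1 1 0 0 1) (-3 : ℚ) := by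
    rw [emono, emono, emono, emono, emono, emono]
    simp only [map_one, map_neg, map_ofNat]
    ring
  rw [hg]
  simp only [mul_add, map_add, T_apply, coeff_mul_monomial', ele, esub]
  norm_num
  try ring

lemma Tg6 (p : P5) : T (p * (vB ^ 4 + 3 * vX ^ 2 - 9 * vX * vY - 3 * vY ^ 2 - 54 * vY * vZ - 81 * vZ ^ 2)) = 0 := by
  have hg : (vB ^ 4 + 3 * vX ^ 2 - 9 * vX * vY - 3 * vY ^ 2 - 54 * vY * vZ - 81 * vZ ^ 2 : P5) = monomial (ee 0 0 0 0 2) (-81 : ℚ) + monomial (ee 0 0 0 1 1) (-54 : ℚ) + monomial (ee 0 0 0 2 0) (-3 : ℚ) + monomial (ee 0 0 1 1 0) (-9 : ℚ) + monomial (ee 0 0 2 0 0) (3 : ℚ) + monomial (ee 0 4 0 0 0) (1 : ℚ) := by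
    rw [emono, emono, emono, emono, emono, emono]
    simp only [map_one, map_neg, map_ofNat]
    ring
  rw [hg]
  simp only [mul_add, map_add, T_apply, coeff_mul_monomial', ele, esub]
  norm_num
  try ring

lemma Tg7 (p : P5) : T (p * (vB * vY * vZ + 9 * vA * vZ ^ 2 - 3 * vB * vZ ^ 2)) = 0 := by
  have hg : (vB * vY * vZ + 9 * vA * vZ ^ 2 - 3 * vB * vZ ^ 2 : P5) = monomial (ee 0 1 0 0 2) (-3 : ℚ) + monomial (ee 0 1 0 1 1) (1 : ℚ) + monomial (ee 1 0 0 0 2) (9 : ℚ) := by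
    rw [emono, emono, emono]
    simp only [map_one, map_neg, map_ofNat]
    ring
  rw [hg]
  simp only [mul_add, map_add, T_apply, coeff_mul_monomial', ele, esub]
  norm_num
  try ring

lemma Tg8 (p : P5) : T (p * (2 * vB * vX * vY - 3 * vB * vY ^ 2 - 9 * vA * vY * vZ - 27 * vA * vZ ^ 2 + 9 * vB * vZ ^ 2)) = 0 := by
  have hg : (2 * vB * vX * vY - 3 * vB * vY ^ 2 - 9 * vA * vY * vZ - 27 * vA * vZ ^ 2 + 9 * vB * vZ ^ 2 : P5) = monomial (ee 0 1 0 0 2) (9 : ℚ) + monomial (ee 0 1 0 2 0) (-3 : ℚ) + monomial (ee 0 1 1 1 0) (2 : ℚ) + monomial (ee 1 0 0 0 2) (-27 : ℚ) + monomial (ee 1 0 0 1 1) (-9 : ℚ) := by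
    rw [emono, emono, emono, emono, emono]
    simp only [map_one, map_neg, map_ofNat]
    ring
  rw [hg]
  simp only [mul_add, map_add, T_apply, coeff_mul_monomial', ele, esub]
  norm_num
  try ring

lemma Tg9 (p : P5) : T (p * (3 * vB * vX ^ 2 - 7 * vB * vY ^ 2 - 36 * vA * vY * vZ - 108 * vA * vZ ^ 2 + 36 * vB * vZ ^ 2)) = 0 := by
  have hg : (3 * vB * vX ^ 2 - 7 * vB * vY ^ 2 - 36 * vA * vY * vZ - 108 * vA * vZ ^ 2 + 36 * vB * vZ ^ 2 : P5) = monomial (ee 0 1 0 0 2) (36 : ℚ) + monomial (ee 0 1 0 2 0) (-7 : ℚ) + monomial (ee 0 1 2 0 0) (3 : ℚ) + monomial (ee 1 0 0 0 2) (-108 : ℚ) + monomial (ee 1 0 0 1 1) (-36 : ℚ) := by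
    rw [emono, emono, emono, emono, emono]
    simp only [map_one, map_neg, map_ofNat]
    ring
  rw [hg]
  simp only [mul_add, map_add, T_apply, coeff_mul_monomial', ele, esub]
  norm_num
  try ring

lemma Tg10 (p : P5) : T (p * (vA ^ 12 + 3 * vA ^ 11 * vB + 3 * vA ^ 10 * (vB ^ 2 + 2 * vX - vY)
      + vA ^ 9 * (-vB ^ 3 + 12 * vB * vX + 2 * vB * vY)
      + 3 * vA ^ 8 * (9 * vX ^ 2 - 16 * vX * vY + 17 * vY ^ 2)
      + 28 * vA ^ 7 * vB * vY ^ 2 + 56 * vA ^ 6 * vY ^ 3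
      + 201 * vA * vB * vZ ^ 5 - 19 * vY * vZ ^ 5 - 613 * vZ ^ 6)) = 0 := by
  have hg : (vA ^ 12 + 3 * vA ^ 11 * vB + 3 * vA ^ 10 * (vB ^ 2 + 2 * vX - vY)
      + vA ^ 9 * (-vB ^ 3 + 12 * vB * vX + 2 * vB * vY)
      + 3 * vA ^ 8 * (9 * vX ^ 2 - 16 * vX * vY + 17 * vY ^ 2)
      + 28 * vA ^ 7 * vB * vY ^ 2 + 56 * vA ^ 6 * vY ^ 3
      + 201 * vA * vB * vZ ^ 5 - 19 * vY * vZ ^ 5 - 613 * vZ ^ 6 : P5) = monomial (ee 0 0 0 0 6) (-613 : ℚ) + monomial (ee 0 0 0 1 5) (-19 : ℚ) + monomial (ee 1 1 0 0 5) (201 : ℚ) + monomial (ee 6 0 0 3 0) (56 : ℚ) + monomial (ee 7 1 0 2 0) (28 : ℚ) + monomial (ee 8 0 0 2 0) (51 : ℚ) + monomial (ee 8 0 1 1 0) (-48 : ℚ) + monomial (ee 8 0 2 0 0) (27 : ℚ) + monomial (ee 9 1 0 1 0) (2 : ℚ) + monomial (ee 9 1 1 0 0) (12 : ℚ) + monomial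 (ee 9 3 0 0 0) (-1 : ℚ) + monomial (ee 10 0 0 1 0) (-3 : ℚ) + monomial (ee 10 0 1 0 0) (6 : ℚ) + monomial (ee 10 2 0 0 0) (3 : ℚ) + monomial (ee 11 1 0 0 0) (3 : ℚ) + monomial (ee 12 0 0 0 0) (1 : ℚ) := by
    rw [emono, emono, emono, emono, emono, emono, emono, emono, emono, emono, emono, emono, emono, emono, emono, emono]
    simp only [map_one, map_neg, map_ofNat]
    ring
  rw [hg]
  simp only [mul_add, map_add, T_apply, coeff_mul_monomial', ele, esub]
  norm_num
  try ring

lemma Tg11 (p : P5) : T (p * (6 * vA ^ 10 * vX * vY - 12 * vA ^ 10 * vY ^ 2 - 10 * vA ^ 9 * vB * vY ^ 2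
      - 45 * vA ^ 8 * vY ^ 3 - 104 * vA * vB * vZ ^ 6 + 2 * vY * vZ ^ 6 + 310 * vZ ^ 7)) = 0 := by
  have hg : (6 * vA ^ 10 * vX * vY - 12 * vA ^ 10 * vY ^ 2 - 10 * vA ^ 9 * vB * vY ^ 2
      - 45 * vA ^ 8 * vY ^ 3 - 104 * vA * vB * vZ ^ 6 + 2 * vY * vZ ^ 6 + 310 * vZ ^ 7 : P5) = monomial (ee 0 0 0 0 7) (310 : ℚ) + monomial (ee 0 0 0 1 6) (2 : ℚ) + monomial (ee 1 1 0 0 6) (-104 : ℚ) + monomial (ee 8 0 0 3 0) (-45 : ℚ) + monomial (ee 9 1 0 2 0) (-10 : ℚ) + monomial (ee 10 0 0 2 0) (-12 : ℚ) + monomial (ee 10 0 1 1 0) (6 : ℚ) := by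
    rw [emono, emono, emono, emono, emono, emono, emono]
    simp only [map_one, map_neg, map_ofNat]
    ring
  rw [hg]
  simp only [mul_add, map_add, T_apply, coeff_mul_monomial', ele, esub]
  norm_num
  try ring
lemma TA14 (p : P5) : T (vA ^ 14 * p) = 0 := by
  have e : vA ^ 14 * p = p * monomial (ee 14 0 0 0 0) 1 := by
    rw [emono]; simp only [map_one]; ring
  rw [e]
  simp only [T_apply, coeff_mul_monomial', ele]
  norm_num

lemma TI (q : P5) (hq : q ∈ I41) (p : P5) : T (p * q) = 0 := by
  revert p
  refine Submodule.span_induction ?_ ?_ ?_ ?_ hq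
  · intro x hx
    simp only [Set.mem_insert_iff, Set.mem_singleton_iff] at hx
    rcases hx with rfl|rfl|rfl|rfl|rfl|rfl|rfl|rfl|rfl|rfl|rfl
    exacts [Tg1, Tg2, Tg3, Tg4, Tg5, Tg6, Tg7, Tg8, Tg9, Tg10, Tg11]
  · intro p; rw [mul_zero, map_zero]
  · intro x y _ _ ihx ihy p; rw [mul_add, map_add, ihx p, ihy p, add_zero]
  · intro a x _ ih p; rw [smul_eq_mul, ← mul_assoc]; exact ih (p * a)

/-- integer-scaled representative of `c₃(0)` -/
def c30p : P5 := (75:ℚ) • vA^2 + (60:ℚ) • (vA*vB) + (-32:ℚ) • vB^2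
  + (144:ℚ) • vX + (-16:ℚ) • vY + (-16:ℚ) • vZ

lemma Tval : T (vA ^ 13 * c30p) = 768 := by
  have e : vA ^ 13 * c30p = monomial (ee 15 0 0 0 0) 75 + monomial (ee 14 1 0 0 0) 60
      + monomial (ee 13 2 0 0 0) (-32) + monomial (ee 13 0 1 0 0) 144
      + monomial (ee 13 0 0 1 0) (-16) + monomial (ee 13 0 0 0 1) (-16) := by
    rw [c30p, emono, emono, emono, emono, emono, emono]
    simp only [map_ofNat, map_neg, smul_eq_C_mul]
    ring
  rw [e]
  simp only [T_apply, coeff_add, coeff_monomial, eeq]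
  norm_num

lemma c30_eq : c30 = (1/512 : ℚ) • qm c30p := by
  rw [c30, c30p, gA, gB, gX, gY, gZ]
  simp only [map_add, map_smul, map_mul, map_pow]
  module

lemma c30p_hom : IsWeightedHomogeneous wt5 c30p 2 := by
  have hA : IsWeightedHomogeneous wt5 vA 1 := by
    have h := isWeightedHomogeneous_X ℚ wt5 (0 : Fin 5)
    simpa [wt5, vA] using h
  have hB : IsWeightedHomogeneous wt5 vB 1 := by
    have h := isWeightedHomogeneous_X ℚ wt5 (1 : Fin 5)
    simpa [wt5, vB] using h
  have hX : IsWeightedHomogeneous wt5 vX 2 := by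
    have h := isWeightedHomogeneous_X ℚ wt5 (2 : Fin 5)
    simpa [wt5, vX] using h
  have hY : IsWeightedHomogeneous wt5 vY 2 := by
    have h := isWeightedHomogeneous_X ℚ wt5 (3 : Fin 5)
    simpa [wt5, vY] using h
  have hZ : IsWeightedHomogeneous wt5 vZ 2 := by
    have h := isWeightedHomogeneous_X ℚ wt5 (4 : Fin 5)
    simpa [wt5, vZ] using h
  have hA2 : IsWeightedHomogeneous wt5 (vA^2) 2 := by
    rw [pow_two]; exact hA.mul hA
  have hAB : IsWeightedHomogeneous wt5 (vA*vB) 2 := hA.mul hB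
  have hB2 : IsWeightedHomogeneous wt5 (vB^2) 2 := by
    rw [pow_two]; exact hB.mul hB
  rw [c30p]
  simp only [smul_eq_C_mul]
  have hsm : ∀ (r : ℚ) (q : P5), IsWeightedHomogeneous wt5 q 2 →
      IsWeightedHomogeneous wt5 (C r * q) 2 := by
    intro r q h
    have := (isWeightedHomogeneous_C wt5 r).mul h
    simpa using this
  exact (((((hsm _ _ hA2).add (hsm _ _ hAB)).add (hsm _ _ hB2)).add
    (hsm _ _ hX)).add (hsm _ _ hY)).add (hsm _ _ hZ)

lemma c30_mem_gr2 : c30 ∈ gr 2 := by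
  refine ⟨(1/512 : ℚ) • c30p, ?_, ?_⟩
  · exact Submodule.smul_mem _ _ ((mem_weightedHomogeneousSubmodule ℚ wt5 2 c30p).mpr c30p_hom)
  · rw [c30_eq]; simp

lemma qm_eq_mk (p : P5) : qm p = Ideal.Quotient.mk I41 p := rfl

lemma gA_pow_mul_qm (n : ℕ) (p : P5) : gA ^ n * qm p = qm (vA ^ n * p) := by
  rw [gA, map_mul, map_pow]

lemma hgmem1 : vX * vZ - vY * vZ ∈ I41 := Ideal.subset_span (Set.mem_insert _ _)
lemma hgmem2 : vB ^ 2 * vZ - 3 * vY * vZ - 9 * vZ ^ 2 ∈ I41 :=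
  Ideal.subset_span (Set.mem_insert_of_mem _ (Set.mem_insert _ _))
lemma hgmem3 : 3 * vA ^ 2 * vZ - vA * vB * vZ + vY * vZ ∈ I41 :=
  Ideal.subset_span (Set.mem_insert_of_mem _ (Set.mem_insert_of_mem _ (Set.mem_insert _ _)))
lemma hgmem4 : vB ^ 2 * vY - 3 * vY ^ 2 - 9 * vY * vZ ∈ I41 :=
  Ideal.subset_span (Set.mem_insert_of_mem _ (Set.mem_insert_of_mem _ (Set.mem_insert_of_mem _
    (Set.mem_insert _ _))))
lemma hgmem5 : vB ^ 2 * vX - vX * vY - 3 * vY ^ 2 - 3 * vA * vB * vZ - 9 * vY * vZ + 9 * vZ ^ 2 ∈ I41 :=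
  Ideal.subset_span (Set.mem_insert_of_mem _ (Set.mem_insert_of_mem _ (Set.mem_insert_of_mem _
    (Set.mem_insert_of_mem _ (Set.mem_insert _ _)))))
lemma hgmem6 : vB ^ 4 + 3 * vX ^ 2 - 9 * vX * vY - 3 * vY ^ 2 - 54 * vY * vZ - 81 * vZ ^ 2 ∈ I41 :=
  Ideal.subset_span (Set.mem_insert_of_mem _ (Set.mem_insert_of_mem _ (Set.mem_insert_of_mem _
    (Set.mem_insert_of_mem _ (Set.mem_insert_of_mem _ (Set.mem_insert _ _))))))
lemma hgmem7 : vB * vY * vZ + 9 * vA * vZ ^ 2 - 3 * vB * vZ ^ 2 ∈ I41 :=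
  Ideal.subset_span (Set.mem_insert_of_mem _ (Set.mem_insert_of_mem _ (Set.mem_insert_of_mem _
    (Set.mem_insert_of_mem _ (Set.mem_insert_of_mem _ (Set.mem_insert_of_mem _
    (Set.mem_insert _ _)))))))
lemma hgmem8 : 2 * vB * vX * vY - 3 * vB * vY ^ 2 - 9 * vA * vY * vZ - 27 * vA * vZ ^ 2 + 9 * vB * vZ ^ 2 ∈ I41 :=
  Ideal.subset_span (Set.mem_insert_of_mem _ (Set.mem_insert_of_mem _ (Set.mem_insert_of_mem _
    (Set.mem_insert_of_mem _ (Set.mem_insert_of_mem _ (Set.mem_insert_of_mem _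
    (Set.mem_insert_of_mem _ (Set.mem_insert _ _))))))))
lemma hgmem9 : 3 * vB * vX ^ 2 - 7 * vB * vY ^ 2 - 36 * vA * vY * vZ - 108 * vA * vZ ^ 2 + 36 * vB * vZ ^ 2 ∈ I41 :=
  Ideal.subset_span (Set.mem_insert_of_mem _ (Set.mem_insert_of_mem _ (Set.mem_insert_of_mem _
    (Set.mem_insert_of_mem _ (Set.mem_insert_of_mem _ (Set.mem_insert_of_mem _
    (Set.mem_insert_of_mem _ (Set.mem_insert_of_mem _ (Set.mem_insert _ _)))))))))
lemma hgmem10 : vA ^ 12 + 3 * vA ^ 11 * vB + 3 * vA ^ 10 * (vB ^ 2 + 2 * vX - vY)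
      + vA ^ 9 * (-vB ^ 3 + 12 * vB * vX + 2 * vB * vY)
      + 3 * vA ^ 8 * (9 * vX ^ 2 - 16 * vX * vY + 17 * vY ^ 2)
      + 28 * vA ^ 7 * vB * vY ^ 2 + 56 * vA ^ 6 * vY ^ 3
      + 201 * vA * vB * vZ ^ 5 - 19 * vY * vZ ^ 5 - 613 * vZ ^ 6 ∈ I41 :=
  Ideal.subset_span (Set.mem_insert_of_mem _ (Set.mem_insert_of_mem _ (Set.mem_insert_of_mem _
    (Set.mem_insert_of_mem _ (Set.mem_insert_of_mem _ (Set.mem_insert_of_mem _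
    (Set.mem_insert_of_mem _ (Set.mem_insert_of_mem _ (Set.mem_insert_of_mem _
    (Set.mem_insert _ _))))))))))
lemma hgmem11 : 6 * vA ^ 10 * vX * vY - 12 * vA ^ 10 * vY ^ 2 - 10 * vA ^ 9 * vB * vY ^ 2
      - 45 * vA ^ 8 * vY ^ 3 - 104 * vA * vB * vZ ^ 6 + 2 * vY * vZ ^ 6 + 310 * vZ ^ 7 ∈ I41 :=
  Ideal.subset_span (Set.mem_insert_of_mem _ (Set.mem_insert_of_mem _ (Set.mem_insert_of_mem _
    (Set.mem_insert_of_mem _ (Set.mem_insert_of_mem _ (Set.mem_insert_of_mem _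
    (Set.mem_insert_of_mem _ (Set.mem_insert_of_mem _ (Set.mem_insert_of_mem _
    (Set.mem_insert_of_mem _ rfl))))))))))

set_option maxHeartbeats 12000000 in
lemma cert : (1062882 : P5) * (vA ^ 14 * c30p)
    = ((-552779568)*vA*vB^11 + (552779568)*vA*vB^9*vY + (4969479258)*vA^2*vB^10 + (-4969479258)*vA^2*vB^8*vY + (124482923172)*vA^4*vB^8 + (-124482923172)*vA^4*vB^6*vY + (969071264856)*vA^6*vB^6 + (-1277630160984)*vA^6*vB^4*vY + (-388601296470)*vA^5*vB^7 + (388601296470)*vA^5*vB^5*vY + (2157051913092)*vA^8*vB^4 + (-2218656553812)*vA^8*vB^2*vY + (-1274401554120)*vA^7*vB^5 + (912987661896)*vA^7*vB^3*vY + (198231390234)*vA^10*vB^2 + (-354801880449)*vA^10*vY + (-4722119950284)*vA^9*vB^3 + (3970976989356)*vA^9*vB*vY + (-28519988544)*vA^3*vB^9 + (28519988544)*vA^3*vB^7*vY + (-629859621672)*vA^10*vZ + (-31969364796)*vA^11*vB + (38193024)*vB^12 + (-38193024)*vB^10*vY + (-728694893088)*vA^9*vB*vZ + (1388515032576)*vA^8*vB^2*vZ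 + (77547870720)*vA^8*vX*vY + (22907232864)*vA^8*vY^2 + (248561332992)*vA^7*vB*vY^2 + (68568643584)*vA^7*vB*vX*vY + (205705930752)*vA^7*vB*vY*vZ + (232643612160)*vA^8*vY*vZ + (-251418359808)*vA^6*vB^2*vY^2 + (91424858112)*vA^6*vB^2*vX*vY + (274274574336)*vA^6*vB^2*vY*vZ + (65373620292)*vA^3*vB*vZ^4 + (-199373279796)*vA^2*vZ^5 + (656759039328)*vA*vB*vZ^5 + (20356316064)*vA*vB*vY*vZ^4 + (-6179595948)*vA^2*vY*vZ^4 + (410187421440)*vA*vB^3*vZ^4 + (-1250969598720)*vB^2*vZ^5 + (-38773935360)*vB^2*vY*vZ^4 + (-215348396256)*vA^2*vB^2*vZ^4) * (vX * vZ - vY * vZ) + ((10352667510)*vA^11*vB + (970864272)*vA^2*vB^8*vZ + (35444408490)*vA^2*vB^6*vZ^2 + (470017193562)*vA^2*vB^2*vZ^4 + (-624193996968)*vA^9*vB^3 + (4613393184048)*vA^9*vB*vZ + (220183742448)*vA^8*vB^4 + (-331320461670)*vA^8*vB^2*vZ + (33939427518)*vA^7*vB^3*vZ + (-31560886062)*vA^5*vB^7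 + (-298124287560)*vA^6*vB^4*vZ + (-646980454944)*vA^5*vB^3*vZ^2 + (85605478236)*vA^6*vB^6 + (504175754106)*vA^6*vB^2*vZ^2 + (-1541914014)*vA^3*vB^9 + (6625972344)*vA^2*vB^8*vY + (-4958405550)*vA^3*vB^7*vZ + (5390243820)*vA^4*vB^6*vZ + (-150197176368)*vA^3*vB^5*vZ^2 + (399267297414)*vA^4*vB^4*vZ^2 + (-478303701570)*vA^3*vB^3*vZ^3 + (496426399542)*vA^4*vB^2*vZ^3 + (50924032)*vB^10*vY + (-12731008)*vA*vB^11 + (184259856)*vA^2*vB^10 + (-737039424)*vA*vB^9*vY + (-114579072)*vA*vB^9*vZ + (-4975016112)*vA*vB^7*vZ^2 + (165977230896)*vA^4*vB^6*vY + (8192061360)*vA^4*vB^8 + (-35494240176)*vA*vB^5*vZ^3 + (1174004578080)*vA^6*vB^4*vY + (-518135061960)*vA^5*vB^5*vY + (-145696925232)*vA*vB^3*vZ^4 + (2814821705088)*vA^8*vB^2*vY + (-1751104725984)*vA^7*vB^3*vY + (-113620105836)*vA^7*vB^5 + (250555890114)*vA^10*vY + (14835313296)*vA^10*vB^2 + (-177346939914)*vA^10*vZ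 + (-6522273198864)*vA^9*vB*vY + (-38026651392)*vA^3*vB^7*vY + (184674241386)*vA^2*vB^4*vZ^3 + (-14449644594)*vA^12 + (-23248063692)*vA^7*vB*vZ^2 + (-16690554144)*vA^8*vZ^2 + (-28811581740)*vA^5*vB*vZ^3 + (-16690554144)*vA^6*vZ^3 + (-41952385566)*vA^3*vB*vZ^4 + (-17195423094)*vA^4*vZ^4 + (-3368154960)*vA*vB*vZ^5 + (7486822710)*vA^2*vZ^5 + (33428303748)*vA^5*vB^5*vZ + (343737216)*vB^8*vZ^2 + (3093634944)*vB^6*vZ^3 + (27842714496)*vB^4*vZ^4 + (390510720)*vB^2*vZ^5 + (-20075715216)*vA^8*vY^2 + (-171421608960)*vA^6*vB^2*vY^2 + (-7142567040)*vA^7*vB*vY^2 + (-47140942464)*vA^7*vB*vY*vZ + (422839968768)*vA^6*vB^2*vY*vZ + (1777138704)*vA*vB*vY*vZ^4 + (652963842)*vA^2*vY*vZ^4 + (-17320725072)*vA^8*vY*vZ + (-15940395648)*vB^2*vY*vZ^4) * (vB ^ 2 * vZ - 3 * vY * vZ - 9 * vZ ^ 2) + ((9855977940)*vA^8*vB^4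 + (4848010725546)*vA^8*vB^2*vZ + (-3999946494366)*vA^7*vB^3*vZ + (5318086981230)*vA^6*vB^2*vZ^2 + (767177240112)*vA^6*vB^4*vZ + (-1940941364832)*vA^5*vB^3*vZ^2 + (-1065518978166)*vA^5*vB^5*vZ + (1197801892242)*vA^4*vB^4*vZ^2 + (389619500976)*vA^4*vB^6*vZ + (-450591529104)*vA^3*vB^5*vZ^2 + (-100435182282)*vA^3*vB^7*vZ + (106333225470)*vA^2*vB^6*vZ^2 + (-14925048336)*vA*vB^7*vZ^2 + (-2002075920)*vA*vB^9*vZ + (34851107304)*vA^5*vB^7 + (4880920806)*vA^3*vB^9 + (-1103713518)*vA^2*vB^10 + (-9066783924)*vA^6*vB^6 + (1489279198626)*vA^4*vB^2*vZ^3 + (-1434911104710)*vA^3*vB^3*vZ^3 + (1470605739696)*vA^2*vB^2*vZ^4 + (-947673779328)*vA*vB^3*vZ^4 + (-106482720528)*vA*vB^5*vZ^3 + (-12731008)*vB^12 + (114579072)*vB^10*vZ + (1031211648)*vB^8*vZ^2 + (9280904832)*vB^6*vZ^3 + (146066832)*vA*vB^11 + (91713752064)*vB^4*vZ^4 + (-16918123644)*vA^4*vB^8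 + (1400547801600)*vB^2*vZ^5 + (192983390676)*vA^7*vB^5 + (17821030590)*vA^2*vB^8*vZ + (554022724158)*vA^2*vB^4*vZ^3 + (5411132262)*vA^10*vB^2 + (-130267703655)*vA^10*vZ + (-42186731364)*vA^9*vB*vZ + (-494012673252)*vA^7*vB*vZ^2 + (-205958188080)*vA^8*vZ^2 + (-86434745220)*vA^5*vB*vZ^3 + (-50071662432)*vA^6*vZ^3 + (-108466281414)*vA^3*vB*vZ^4 + (-50071662432)*vA^4*vZ^4 + (-165922966080)*vA*vB*vZ^5 + (-35297602632)*vA^2*vZ^5 + (6904770156)*vA^9*vB^3 + (387125244)*vA^11*vB + (-5668704)*vA^12) * (3 * vA ^ 2 * vZ - vA * vB * vZ + vY * vZ) + ((-5494037058)*vA^10*vY + (-13969458126)*vA^10*vB^2 + (-10359910854)*vA^11*vB + (-2539579392)*vA^8*vB^2*vY + (-58200583968)*vA^9*vB*vY + (1409912973)*vA^10*vX + (-28731826224)*vA^9*vB^3 + (-3809369088)*vA^7*vB^3*vY + (-120445788240)*vA^8*vB^2*vX + (19778108256)*vA^8*vX*vY + (8616430080)*vA^8*vX^2 + (-50508152640)*vA^9*vB*vX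 + (-29998781568)*vA^7*vB^3*vX + (42855402240)*vA^7*vB*vX*vY + (7618738176)*vA^7*vB*vX^2 + (-5079158784)*vA^7*vB^5 + (9153067392)*vA^8*vB^4 + (-34284321792)*vA^6*vB^4*vX + (-7618738176)*vA^6*vB^2*vX*vY + (10158317568)*vA^6*vB^2*vX^2 + (-6772211712)*vA^6*vB^6 + (-20316635136)*vA^6*vB^4*vY + (-58458510)*vA^12 + (85075909632)*vA^6*vB^2*vY^2 + (-25237070208)*vA^7*vB*vY^2 + (4146656976)*vA^8*vY^2) * (vB ^ 2 * vY - 3 * vY ^ 2 - 9 * vY * vZ) + ((552779568)*vA*vB^9*vZ + (-4969479258)*vA^2*vB^8*vZ + (-124482923172)*vA^4*vB^6*vZ + (-969071264856)*vA^6*vB^4*vZ + (388601296470)*vA^5*vB^5*vZ + (-2157051913092)*vA^8*vB^2*vZ + (1274401554120)*vA^7*vB^3*vZ + (-108694210554)*vA^10*vZ + (4755179832012)*vA^9*vB*vZ + (28519988544)*vA^3*vB^7*vZ + (-10656454932)*vA^10*vX + (9471872943)*vA^10*vY + (-38193024)*vB^10*vZ + (8551948572)*vA^10*vB^2 + (465542316)*vA^11*vB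 + (29845726560)*vA^9*vB*vX + (1377495072)*vA^9*vB*vY + (12499492320)*vA^9*vB^3 + (11019960576)*vA^8*vB^2*vX + (29998781568)*vA^7*vB^3*vY + (82488146256)*vA^8*vB^2*vY + (-22856214528)*vA^7*vB*vX*vY + (-25849290240)*vA^8*vX*vY + (34284321792)*vA^6*vB^4*vY + (-30474952704)*vA^6*vB^2*vX*vY + (389014812)*vA^12 + (-18366600960)*vA^8*vB^4) * (vB ^ 2 * vX - vX * vY - 3 * vY ^ 2 - 3 * vA * vB * vZ - 9 * vY * vZ + 9 * vZ ^ 2) + ((1936571004)*vA^11*vB + (-66961566)*vA^12 + (1071385056)*vA^10*vB^2 + (-408146688)*vA^9*vB^3 + (34105757616)*vA^9*vB*vY + (-1973771874)*vA^10*vY + (2927177028)*vA^10*vX + (5079158784)*vA^7*vB^3*vY + (-9153067392)*vA^8*vB^2*vY + (6772211712)*vA^6*vB^4*vY + (18366600960)*vA^8*vB^2*vX + (-9642465504)*vA^9*vB*vX) * (vB ^ 4 + 3 * vX ^ 2 - 9 * vX * vY - 3 * vY ^ 2 - 54 * vY * vZ - 81 * vZ ^ 2) + ((42642648693)*vA^11)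 * (vB * vY * vZ + 9 * vA * vZ ^ 2 - 3 * vB * vZ ^ 2) + ((9687106548)*vA^11 + (-35661816864)*vA^9*vX) * (2 * vB * vX * vY - 3 * vB * vY ^ 2 - 9 * vA * vY * vZ - 27 * vA * vZ ^ 2 + 9 * vB * vZ ^ 2) + ((-1199993778)*vA^11) * (3 * vB * vX ^ 2 - 7 * vB * vY ^ 2 - 36 * vA * vY * vZ - 108 * vA * vZ ^ 2 + 36 * vB * vZ ^ 2) + ((252965916)*vA^2*vB^2 + (-153055008)*vA*vB^3 + (-408146688)*vB^4 + (-175375530)*vA^3*vB + (79716150)*vA^4 + (-1351985904)*vA*vB*vY + (4557638016)*vB^2*vY + (222142338)*vA^2*vY + (1071385056)*vA*vB*vX + (-2040733440)*vB^2*vX + (-325241892)*vA^2*vX) * (vA ^ 12 + 3 * vA ^ 11 * vB + 3 * vA ^ 10 * (vB ^ 2 + 2 * vX - vY) + vA ^ 9 * (-vB ^ 3 + 12 * vB * vX + 2 * vB * vY) + 3 * vA ^ 8 * (9 * vX ^ 2 - 16 * vX * vY + 17 * vY ^ 2) + 28 * vA ^ 7 * vB * vY ^ 2 + 56 * vA ^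 6 * vY ^ 3 + 201 * vA * vB * vZ ^ 5 - 19 * vY * vZ ^ 5 - 613 * vZ ^ 6) + ((-97785144)*vA*vB + (11337408)*vB^2 + (217359369)*vA^2) * (6 * vA ^ 10 * vX * vY - 12 * vA ^ 10 * vY ^ 2 - 10 * vA ^ 9 * vB * vY ^ 2 - 45 * vA ^ 8 * vY ^ 3 - 104 * vA * vB * vZ ^ 6 + 2 * vY * vZ ^ 6 + 310 * vZ ^ 7) := by
  rw [c30p]
  simp only [smul_eq_C_mul, map_neg, map_ofNat]
  ring

lemma memA14 : vA ^ 14 * c30p ∈ I41 := by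
  have h1 : vA ^ 14 * c30p
      = C ((1062882 : ℚ)⁻¹) * ((1062882 : P5) * (vA ^ 14 * c30p)) := by
    rw [show ((1062882 : P5)) = C (1062882 : ℚ) from by norm_num [map_ofNat], ← mul_assoc,
      ← C_mul]
    norm_num
  rw [h1, cert]
  exact Ideal.mul_mem_left _ _ (Ideal.add_mem _ (Ideal.add_mem _ (Ideal.add_mem _ (Ideal.add_mem _ (Ideal.add_mem _ (Ideal.add_mem _ (Ideal.add_mem _ (Ideal.add_mem _ (Ideal.add_mem _ (Ideal.add_mem _ (Ideal.mul_mem_left _ _ hgmem1) (Ideal.mul_mem_left _ _ hgmem2)) (Ideal.mul_mem_left _ _ hgmem3)) (Ideal.mul_mem_left _ _ hgmem4)) (Ideal.mul_mem_left _ _ hgmem5)) (Ideal.mul_mem_left _ _ hgmem6)) (Ideal.mul_mem_left _ _ hgmem7)) (Ideal.mul_mem_left _ _ hgmem8)) (Ideal.mul_mem_left _ _ hgmem9)) (Ideal.mul_mem_left _ _ hgmem10)) (Ideal.mul_mem_left _ _ hgmem11))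

lemma kerA_pos {n : ℤ} {m : ℕ} (h : n = (m : ℤ)) (hm : 0 < m) :
    kerA n = LinearMap.ker (mulA m) := by
  subst h
  rw [kerA, if_neg (by omega), Int.toNat_natCast]

/-- `c₃(0) ∈ P₃ R²` and `c₃(0) ∉ P₂ R²`: the class `c₃(0)` has perversity 3. -/
theorem c30_perversity_three : c30 ∈ pervP 3 2 ∧ c30 ∉ pervP 2 2 := by
  constructor
  · rw [pervP]
    refine Submodule.mem_inf.mpr ⟨?_, c30_mem_gr2⟩
    refine Submodule.mem_iSup_of_mem 0 (Submodule.mem_inf.mpr ⟨?_, ⟨c30, by simp [mulA]⟩⟩)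
    rw [kerA_pos (m := 14) (by norm_num) (by norm_num), LinearMap.mem_ker, mulA,
      LinearMap.mulLeft_apply]
    rw [c30_eq, mul_smul_comm, gA_pow_mul_qm, qm_eq_mk,
      Ideal.Quotient.eq_zero_iff_mem.mpr memA14, smul_zero]
  · intro hc
    have hsup := (Submodule.mem_inf.mp hc).1
    have key : ∀ i : ℕ, kerA (14 + 2 - 2 * ((2 : ℕ) : ℤ) + ((i : ℤ) + 1)) ⊓ LinearMap.range (mulA i) ≤
        (LinearMap.ker (T ∘ₗ LinearMap.mulLeft ℚ (vA ^ 13))).map qm.toLinearMap := by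
      intro i
      match i with
      | 0 =>
        intro u hu
        obtain ⟨hk, hr⟩ := Submodule.mem_inf.mp hu
        obtain ⟨v, hv⟩ := hr
        obtain ⟨r, hrr⟩ := Ideal.Quotient.mk_surjective (I := I41) v
        rw [← qm_eq_mk] at hrr
        have hu' : qm r = u := by
          rw [hrr]; simpa [mulA] using hv
        rw [kerA_pos (m := 13) (by norm_num) (by norm_num), LinearMap.mem_ker, mulA,
          LinearMap.mulLeft_apply, ← hu', gA_pow_mul_qm, qm_eq_mk] at hk
        have hmem : vA ^ 13 * r ∈ I41 := Ideal.Quotient.eq_zero_iff_mem.mp hk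
        refine ⟨r, ?_, by simpa using hu'⟩
        have h2 := TI _ hmem 1
        rw [one_mul] at h2
        simp only [SetLike.mem_coe, LinearMap.mem_ker, LinearMap.comp_apply,
          LinearMap.mulLeft_apply]
        exact h2
      | Nat.succ j =>
        intro u hu
        obtain ⟨-, hr⟩ := Submodule.mem_inf.mp hu
        obtain ⟨v, hv⟩ := hr
        obtain ⟨r, hrr⟩ := Ideal.Quotient.mk_surjective (I := I41) v
        rw [← qm_eq_mk] at hrr
        refine ⟨vA ^ (j + 1) * r, ?_, ?_⟩
        · simp only [SetLike.mem_coe]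
          rw [LinearMap.mem_ker, LinearMap.comp_apply, LinearMap.mulLeft_apply,
            show vA ^ 13 * (vA ^ (j + 1) * r) = vA ^ 14 * (vA ^ j * r) from by ring]
          exact TA14 _
        · rw [← hv, ← hrr]
          show qm (vA ^ (j + 1) * r) = mulA (j + 1) (qm r)
          rw [mulA, LinearMap.mulLeft_apply, gA_pow_mul_qm]
    have hW := (iSup_le key) hsup
    obtain ⟨p, hker, hqp⟩ := hW
    have hqp' : qm p = c30 := by simpa using hqp
    have hd : p - (1 / 512 : ℚ) • c30p ∈ I41 := by
      rw [← Ideal.Quotient.eq_zero_iff_mem, ← qm_eq_mk, map_sub, hqp', map_smul, ← c30_eq,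
        sub_self]
    have h0 := TI _ hd (vA ^ 13)
    rw [mul_sub, map_sub] at h0
    have h1 : T (vA ^ 13 * p) = 0 := by simpa [LinearMap.mem_ker] using hker
    rw [h1, mul_smul_comm, map_smul, smul_eq_mul, Tval] at h0
    norm_num at h0
end
end

section
/- Define integers b_j := 1 if j is even with 0 ≤ j ≤ 18 and b_j := 0 otherwise (the Betti numbers of ℙ⁹), and B_j := #{(a,c) ∈ ℤ² : 0 ≤ a ≤ 2, 0 ≤ c ≤ 8, 2a + 2c = j} (the Betti numbers of ℙ² × ℙ⁸). Define n^{0,j} := b_j, n^{2,j} := b_j, and n^{1,j} := B_{1+j} − b_{1+j} − b_{j−1} for all integers j ≥ 0. Then n^{1,j} ≥ 0 for all j, and Σ_{i=0}^{2} Σ_{j≥0} n^{i,j} q^i t^j = (1+q²)·(1 + t² + t⁴ + ··· + t^{18}) + q·(t³ + t⁵ + t⁷ + t⁹ + t¹¹ + t¹³ + t¹⁵), which is the combinatorial refined BPS polynomial F̃_{3,BPS}(q,t) of degree 3 for local ℙ². (This is the decomposition-theorem computation of the refined BPS invariants n_3^{i,j} of the elliptic fibration h : M_{3,χ} → ℙ⁹.)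 -/
open scoped BigOperators

noncomputable section

/-- the Betti numbers of `ℙ⁹`: `b_j = 1` if `j` is even with `0 ≤ j ≤ 18`, else `0`
(defined on `ℤ`) -/
def bP9 (j : ℤ) : ℤ := if 0 ≤ j ∧ j ≤ 18 ∧ 2 ∣ j then 1 else 0

/-- the Betti numbers of `ℙ² × ℙ⁸`:
`B_j = #{(a,c) : 0 ≤ a ≤ 2, 0 ≤ c ≤ 8, 2a + 2c = j}` -/
def bP2P8 (j : ℤ) : ℤ :=
  (((Finset.range 3) ×ˢ (Finset.range 9)).filter
    fun p => 2 * (p.1 : ℤ) + 2 * (p.2 : ℤ) = j).card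

/-- the refined BPS invariants `n^{i,j}` of local `ℙ²` in degree 3, computed from the
decomposition theorem for the elliptic fibration `h : M_{3,χ} → ℙ⁹`:
`n^{0,j} = b_j`, `n^{2,j} = b_j`, `n^{1,j} = B_{1+j} - b_{1+j} - b_{j-1}` -/
def n3 (i j : ℕ) : ℤ :=
  if i = 0 ∨ i = 2 then bP9 j
  else if i = 1 then bP2P8 (1 + j) - bP9 (1 + j) - bP9 ((j : ℤ) - 1)
  else 0

open MvPolynomial in
/-- the combinatorial refined BPS polynomial
`F̃_{3,BPS}(q,t) = (1+q²)·(1 + t² + ⋯ + t¹⁸) + q·(t³ + t⁵ + ⋯ + t¹⁵)` -/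
def F3BPS : MvPolynomial (Fin 2) ℤ :=
  (1 + X 0 ^ 2) * (∑ c ∈ Finset.range 10, X 1 ^ (2 * c))
    + X 0 * (∑ c ∈ Finset.range 7, X 1 ^ (2 * c + 3))

open Finset MvPolynomial

namespace Finsupp

theorem single_add_single_inj {σ M : Type*} [AddZeroClass M] {x y : σ} (hxy : x ≠ y)
    {a b i j : M} :
    single x a + single y b = single x i + single y j ↔ a = i ∧ b = j := by
  refine ⟨fun h => ⟨?_, ?_⟩, by rintro ⟨rfl, rfl⟩; rfl⟩
  · simpa [hxy, hxy.symm] using DFunLike.congr_fun h x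
  · simpa [hxy, hxy.symm] using DFunLike.congr_fun h y

end Finsupp

namespace MvPolynomial

theorem coeff_sum_sum_monomial {R σ : Type*} [CommSemiring R] {x y : σ} (hxy : x ≠ y)
    {m n : ℕ} (c : ℕ → ℕ → R) (hc : ∀ a b, c a b ≠ 0 → a < m ∧ b < n) (i j : ℕ) :
    coeff (Finsupp.single x i + Finsupp.single y j)
        (∑ a ∈ range m, ∑ b ∈ range n,
          monomial (Finsupp.single x a + Finsupp.single y b) (c a b)) = c i j := by
  classical
  simp only [coeff_sum, coeff_monomial, Finsupp.single_add_single_inj hxy, ite_and,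
    sum_ite_irrel, sum_const_zero, sum_ite_eq', mem_range]
  by_cases hij : c i j = 0
  · split_ifs <;> simp [hij]
  · simp [hc i j hij]

end MvPolynomial

theorem bP9_eq_zero_of_lt {j : ℤ} (hj : 18 < j) : bP9 j = 0 :=
  if_neg (by omega)

theorem bP2P8_eq_zero_of_lt {j : ℤ} (hj : 20 < j) : bP2P8 j = 0 := by
  rw [bP2P8, Nat.cast_eq_zero, card_eq_zero, filter_eq_empty_iff]
  intro p hp
  rw [mem_product, mem_range, mem_range] at hp
  omega

theorem bP9_natCast (j : ℕ) : bP9 j = if Even j ∧ j ≤ 18 then 1 else 0 := by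
  simp only [bP9, Nat.cast_nonneg, true_and, Int.even_coe_nat, ← even_iff_two_dvd]
  norm_cast
  simp only [and_comm]

theorem n3_of_eq_zero_or_eq_two {i : ℕ} (hi : i = 0 ∨ i = 2) (j : ℕ) : n3 i j = bP9 j :=
  if_pos hi

theorem n3_eq_zero_of_two_lt {i : ℕ} (hi : 2 < i) (j : ℕ) : n3 i j = 0 := by
  rw [n3, if_neg (by omega), if_neg (by omega)]

/-- For odd `j = 2m - 1 ≤ 19`, `B_{2m}` is `2, 3, …, 3, 2, 1` for `m = 1, …, 10`, while
`b_{2m} + b_{2m-2}` is `2` for `m ≤ 9` and `1` for `m = 10`; for even `j` everything vanishes. -/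
theorem n3_one (j : ℕ) : n3 1 j = if Odd j ∧ 3 ≤ j ∧ j ≤ 15 then 1 else 0 := by
  rcases lt_or_ge j 20 with hj | hj
  · interval_cases j <;> decide
  · rw [n3, if_neg (by omega), if_pos rfl, bP2P8_eq_zero_of_lt (by omega),
      bP9_eq_zero_of_lt (by omega), bP9_eq_zero_of_lt (by omega), if_neg (by omega)]
    rfl

theorem lt_and_lt_of_n3_ne_zero {i j : ℕ} (h : n3 i j ≠ 0) : i < 3 ∧ j < 20 := by
  rcases lt_or_ge 2 i with hi | hi
  · exact absurd (n3_eq_zero_of_two_lt hi j) h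
  interval_cases i
  all_goals first
    | rw [n3_one] at h
    | rw [n3_of_eq_zero_or_eq_two (by decide), bP9_natCast] at h
  all_goals split_ifs at h <;> omega

theorem F3BPS_eq_sum_monomial_n3 :
    F3BPS = ∑ a ∈ range 3, ∑ b ∈ range 20,
      monomial (Finsupp.single 0 a + Finsupp.single 1 b) (n3 a b) := by
  rw [F3BPS]
  simp +decide only [sum_range_succ, sum_range_zero, n3_one, bP9_natCast,
    n3_of_eq_zero_or_eq_two (Or.inl rfl), n3_of_eq_zero_or_eq_two (Or.inr rfl), if_true,
    if_false, map_zero, monomial_single_add, Finsupp.single_zero, monomial_zero', C_1,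
    ← X_pow_eq_monomial]
  ring

/-- The decomposition-theorem computation of the degree-3 refined BPS invariants of
local `ℙ²`: `n^{1,j} ≥ 0`, and `Σ_{i=0}^{2} Σ_{j≥0} n^{i,j} q^i t^j = F̃_{3,BPS}(q,t)`
(stated coefficientwise; for `i ≥ 3` the left-hand side has no terms). -/
theorem degree_three_BPS_from_decomposition :
    (∀ j : ℕ, 0 ≤ n3 1 j) ∧
      (∀ i j : ℕ,
        (if i ≤ 2 then n3 i j else 0)
          = MvPolynomial.coeff (Finsupp.single 0 i + Finsupp.single 1 j) F3BPS) := by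
  refine ⟨fun j => ?_, fun i j => ?_⟩
  · rw [n3_one]
    split_ifs <;> norm_num
  · rw [F3BPS_eq_sum_monomial_n3, coeff_sum_sum_monomial (by decide) n3 (fun _ _ => lt_and_lt_of_n3_ne_zero),
      ite_eq_left_iff, not_le]
    exact fun hi => (n3_eq_zero_of_two_lt hi j).symm
end
end
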